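/- Let Q = diag(q_1, ..., q_ν) be real diagonal, B a ν × ν matrix with B_{ij} = 0 unless i ~ j for some graph adjacency relation ~ on {1,...,ν}, let a = q_n be a simple eigenvalue of Q, and let P(ε) = (2πi)^{-1} ∮_{|λ-a|=ϵ} (λ - Q - εB)^{-1} dλ be the spectral projection. Then for i ≠ n, the entry P_{in}(ε) is O(ε^{d(i,n)}) as ε → 0, where d(i,n) is the graph distance from i to n in the graph with adjacency ~. -/

import Mathlib

/-!
For `z` on the contour, `z - Q - εB = D (1 - X)` with `D = z - Q` diagonal, `‖D⁻¹‖ ≤ 1/δ` for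
some `δ > 0` depending only on the contour, and `X = ε D⁻¹ B`. Hence the resolvent is
`∑ₖ Xᵏ D⁻¹`. The matrix `Xᵏ D⁻¹` vanishes at `(i, n)` unless the graph has a walk of length `≤ k`
from `i` to `n`, so the first `d(i, n)` terms do not contribute and the remainder
`X^{d(i,n)} (1 - X)⁻¹ D⁻¹` is `O(ε^{d(i,n)})` uniformly on the contour; integrate.
-/

open Matrix Filter Metric Topology

attribute [local instance] Matrix.linftyOpSeminormedAddCommGroup Matrix.linftyOpNormedRing
  Matrix.linftyOpNormedAlgebra

namespace Matrix

variable {ι R : Type*}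

/-- The graph analogue of a band matrix of bandwidth `k`. -/
def IsBanded [Zero R] (G : SimpleGraph ι) (k : ℕ) (A : Matrix ι ι R) : Prop :=
  ∀ x y, A x y ≠ 0 → ∃ p : G.Walk x y, p.length ≤ k

section Semiring

variable [Semiring R] {G : SimpleGraph ι} {A C : Matrix ι ι R} {k m : ℕ}

theorem isBanded_diagonal [DecidableEq ι] (G : SimpleGraph ι) (r : ι → R) :
    (diagonal r).IsBanded G 0 := by
  intro x y hxy
  obtain rfl : x = y := by_contra fun h => hxy (diagonal_apply_ne r h)
  exact ⟨.nil, le_rfl⟩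

theorem isBanded_fromRel (B : Matrix ι ι R) :
    B.IsBanded (SimpleGraph.fromRel fun i j => B i j ≠ 0) 1 := by
  intro x y hxy
  rcases eq_or_ne x y with rfl | hne
  · exact ⟨.nil, zero_le_one⟩
  · have hadj : (SimpleGraph.fromRel fun i j => B i j ≠ 0).Adj x y := ⟨hne, Or.inl hxy⟩
    exact ⟨hadj.toWalk, hadj.length_toWalk.le⟩

theorem IsBanded.mul [Fintype ι] (hA : A.IsBanded G k) (hC : C.IsBanded G m) :
    (A * C).IsBanded G (k + m) := by
  intro x y hxy
  obtain ⟨z, -, hz⟩ := Finset.exists_ne_zero_of_sum_ne_zero hxy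
  obtain ⟨p, hp⟩ := hA x z (left_ne_zero_of_mul hz)
  obtain ⟨p', hp'⟩ := hC z y (right_ne_zero_of_mul hz)
  exact ⟨p.append p', by rw [SimpleGraph.Walk.length_append]; omega⟩

theorem IsBanded.smul (hA : A.IsBanded G k) (c : R) : (c • A).IsBanded G k :=
  fun x y hxy => hA x y (right_ne_zero_of_mul hxy)

theorem IsBanded.pow [Fintype ι] [DecidableEq ι] (hA : A.IsBanded G k) (m : ℕ) :
    (A ^ m).IsBanded G (k * m) := by
  induction m with
  | zero => exact isBanded_diagonal G 1
  | succ m ih => simpa only [pow_succ, Nat.mul_succ] using ih.mul hA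

theorem IsBanded.apply_eq_zero (hA : A.IsBanded G k) {x y : ι} (hxy : k < G.dist x y) :
    A x y = 0 := by
  by_contra h
  obtain ⟨p, hp⟩ := hA x y h
  exact absurd (G.dist_le p) (by omega)

end Semiring

end Matrix

theorem norm_ringInverse_one_sub_le {R : Type*} [NormedRing R] [HasSummableGeomSeries R]
    [NormOneClass R] {x : R} (hx : ‖x‖ < 1) : ‖Ring.inverse (1 - x)‖ ≤ (1 - ‖x‖)⁻¹ := by
  simpa [geom_series_eq_inverse x hx] using tsum_geometric_le_of_norm_lt_one x hx

theorem exists_pos_le_dist_of_mem_sphere {E ι : Type*} [PseudoMetricSpace E] [Finite ι]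
    {c : ι → E} {a : E} {r : ℝ} (hr : 0 < r) (hc : ∀ t, c t ≠ a → r < dist (c t) a) :
    ∃ δ > 0, ∀ z ∈ sphere a r, ∀ t, δ ≤ dist z (c t) := by
  have hsep : ∀ t, ∃ δ > 0, ∀ z ∈ sphere a r, δ ≤ dist z (c t) := by
    intro t
    by_cases ht : c t = a
    · exact ⟨r, hr, fun z hz => by rw [ht, mem_sphere.1 hz]⟩
    · refine ⟨dist (c t) a - r, sub_pos.2 (hc t ht), fun z hz => ?_⟩
      linarith [dist_triangle (c t) z a, mem_sphere.1 hz, dist_comm z (c t)]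
  choose δ hδ hδle using hsep
  have : ∀ᶠ η in 𝓝[>] (0 : ℝ), 0 < η ∧ ∀ t, η ≤ δ t :=
    eventually_mem_nhdsWithin.and
      (eventually_all.2 fun t => (eventually_le_nhds (hδ t)).filter_mono nhdsWithin_le_nhds)
  obtain ⟨η, hη, hηle⟩ := this.exists
  exact ⟨η, hη, fun z hz t => (hηle t).trans (hδle t z hz)⟩

theorem isBigO_circleIntegral {α E F : Type*} [NormedAddCommGroup E] [NormedSpace ℂ E] [Norm F]
    {l : Filter α} {f : α → ℂ → E} {g : α → F} {c : ℂ} {R C : ℝ} (hR : 0 ≤ R)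
    (hf : ∀ᶠ a in l, ∀ z ∈ sphere c R, ‖f a z‖ ≤ C * ‖g a‖) :
    (fun a => ∮ z in C(c, R), f a z) =O[l] g := by
  refine Asymptotics.IsBigO.of_bound (2 * Real.pi * R * C) ?_
  filter_upwards [hf] with a ha
  calc ‖∮ z in C(c, R), f a z‖ ≤ 2 * Real.pi * R * (C * ‖g a‖) :=
        circleIntegral.norm_integral_le_of_norm_le_const hR ha
    _ = 2 * Real.pi * R * C * ‖g a‖ := by ring

namespace Matrix

theorem norm_apply_le_linfty_opNorm {m n α : Type*} [Fintype m] [Fintype n]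
    [SeminormedAddCommGroup α] (A : Matrix m n α) (x : m) (y : n) : ‖A x y‖ ≤ ‖A‖ := by
  have h : ‖A x y‖₊ ≤ ‖A‖₊ := by
    rw [linfty_opNNNorm_def]
    calc ‖A x y‖₊ ≤ ∑ j, ‖A x j‖₊ :=
          Finset.single_le_sum (f := fun j => ‖A x j‖₊) (fun _ _ => zero_le) (Finset.mem_univ y)
      _ ≤ _ := Finset.le_sup (f := fun i => ∑ j, ‖A i j‖₊) (Finset.mem_univ x)
  exact_mod_cast h

variable {ι 𝕜 : Type*} [Fintype ι] [DecidableEq ι] [NormedField 𝕜] [CompleteSpace 𝕜]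

-- Not found by instance search: the `L^∞` operator-norm uniformity agrees with the product
-- uniformity of `Matrix.instCompleteSpace` only after unfolding.
instance linftyOpHasSummableGeomSeries : HasSummableGeomSeries (Matrix ι ι 𝕜) :=
  @instHasSummableGeomSeriesOfCompleteSpace _ _ (instCompleteSpace ι ι 𝕜)

theorem norm_inv_one_sub_mul_apply_le {G : SimpleGraph ι} {X R : Matrix ι ι 𝕜}
    (hX : X.IsBanded G 1) (hR : R.IsBanded G 0) (hX1 : ‖X‖ < 1) (x y : ι) :
    ‖((1 - X)⁻¹ * R) x y‖ ≤ (1 - ‖X‖)⁻¹ * ‖X‖ ^ G.dist x y * ‖R‖ := by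
  have : Nonempty ι := ⟨x⟩
  set m := G.dist x y
  have hhead : ((∑ k ∈ Finset.range m, X ^ k) * R) x y = 0 := by
    rw [Finset.sum_mul, sum_apply]
    refine Finset.sum_eq_zero fun k hk => ((hX.pow k).mul hR).apply_eq_zero ?_
    simpa using hk
  rw [nonsing_inv_eq_ringInverse, NormedRing.inverse_one_sub_nth_order' m hX1, add_mul,
    add_apply, hhead, zero_add]
  calc ‖(X ^ m * Ring.inverse (1 - X) * R) x y‖
      ≤ ‖X ^ m * Ring.inverse (1 - X) * R‖ := norm_apply_le_linfty_opNorm _ x y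
    _ ≤ ‖X ^ m‖ * ‖Ring.inverse (1 - X)‖ * ‖R‖ := norm_mul₃_le
    _ ≤ ‖X‖ ^ m * (1 - ‖X‖)⁻¹ * ‖R‖ := by
      gcongr
      · exact norm_pow_le X m
      · exact norm_ringInverse_one_sub_le hX1
    _ = (1 - ‖X‖)⁻¹ * ‖X‖ ^ m * ‖R‖ := by ring

theorem norm_inv_diagonal_sub_smul_apply_le {G : SimpleGraph ι} {B : Matrix ι ι 𝕜}
    (hB : B.IsBanded G 1) {d : ι → 𝕜} {δ : ℝ} (hδ : 0 < δ) (hd : ∀ t, δ ≤ ‖d t‖) {ε : 𝕜}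
    (hε : 2 * ‖ε‖ * ‖B‖ ≤ δ) (x y : ι) :
    ‖(diagonal d - ε • B)⁻¹ x y‖ ≤ 2 / δ * (‖B‖ / δ) ^ G.dist x y * ‖ε‖ ^ G.dist x y := by
  have hd0 : ∀ t, d t ≠ 0 := fun t => norm_pos_iff.1 (hδ.trans_le (hd t))
  set R := diagonal fun t => (d t)⁻¹
  set X := ε • (R * B)
  have hRd : R * diagonal d = 1 := by
    rw [diagonal_mul_diagonal, ← diagonal_one]
    exact congrArg diagonal (funext fun t => inv_mul_cancel₀ (hd0 t))
  have hdR : diagonal d * R = 1 := by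
    rw [diagonal_mul_diagonal, ← diagonal_one]
    exact congrArg diagonal (funext fun t => mul_inv_cancel₀ (hd0 t))
  have hfactor : diagonal d - ε • B = diagonal d * (1 - X) := by
    rw [mul_sub, mul_one, Matrix.mul_smul, ← Matrix.mul_assoc, hdR, Matrix.one_mul]
  have hinv : (diagonal d - ε • B)⁻¹ = (1 - X)⁻¹ * R := by
    rw [hfactor, Matrix.mul_inv_rev, inv_eq_left_inv hRd]
  have hRnorm : ‖R‖ ≤ δ⁻¹ := by
    rw [linfty_opNorm_diagonal]
    refine (pi_norm_le_iff_of_nonneg (inv_nonneg.2 hδ.le)).2 fun t => ?_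
    rw [norm_inv]
    exact inv_anti₀ hδ (hd t)
  have hXnorm : ‖X‖ ≤ ‖ε‖ * ‖B‖ / δ := by
    calc ‖X‖ ≤ ‖ε‖ * (‖R‖ * ‖B‖) := (norm_smul_le _ _).trans (by gcongr; exact norm_mul_le _ _)
      _ ≤ ‖ε‖ * (δ⁻¹ * ‖B‖) := by gcongr
      _ = ‖ε‖ * ‖B‖ / δ := by ring
  have hXhalf : ‖X‖ ≤ 1 / 2 := hXnorm.trans (by rw [div_le_iff₀ hδ]; linarith)
  have hXband : X.IsBanded G 1 := by
    simpa using ((isBanded_diagonal G _).mul hB).smul ε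
  rw [hinv]
  calc ‖((1 - X)⁻¹ * R) x y‖ ≤ (1 - ‖X‖)⁻¹ * ‖X‖ ^ G.dist x y * ‖R‖ :=
        norm_inv_one_sub_mul_apply_le hXband (isBanded_diagonal G _) (by linarith) x y
    _ ≤ 2 * (‖ε‖ * ‖B‖ / δ) ^ G.dist x y * δ⁻¹ := by
        gcongr
        rw [inv_le_comm₀ (by linarith) two_pos]
        linarith
    _ = 2 / δ * (‖B‖ / δ) ^ G.dist x y * ‖ε‖ ^ G.dist x y := by
        rw [mul_div_right_comm, mul_pow]; ring

end Matrix

theorem spectral_projection_entry_decay_general {ν : ℕ}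
    (q : Fin ν → ℝ) (n : Fin ν)
    (B : Matrix (Fin ν) (Fin ν) ℂ)
    (G : SimpleGraph (Fin ν)) (hG : G = SimpleGraph.fromRel fun i j => B i j ≠ 0)
    (ϵ : ℝ) (hϵ : 0 < ϵ) (hϵ' : ∀ i, i ≠ n → ϵ < |q i - q n|)
    (P : ℝ → Matrix (Fin ν) (Fin ν) ℂ)
    (hP : ∀ (ε : ℝ) (i j : Fin ν), P ε i j =
      (2 * Real.pi * Complex.I)⁻¹ *
        ∮ z in C((q n : ℂ), ϵ),
          ((z • (1 : Matrix (Fin ν) (Fin ν) ℂ) - Matrix.diagonal (fun t => (q t : ℂ)) -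
            (ε : ℂ) • B)⁻¹ i j))
    (i : Fin ν) :
    (fun ε : ℝ => P ε i n) =O[nhds 0] fun ε : ℝ => ε ^ G.dist i n := by
  obtain ⟨δ, hδ, hδz⟩ := exists_pos_le_dist_of_mem_sphere
    (c := fun t => (q t : ℂ)) (a := q n) hϵ fun t ht => by
      simpa [Complex.dist_eq, ← Complex.ofReal_sub] using hϵ' t (by rintro rfl; exact ht rfl)
  have hsmall : ∀ᶠ ε : ℝ in 𝓝 0, 2 * ‖(ε : ℂ)‖ * ‖B‖ < δ :=
    (Continuous.tendsto' (by fun_prop) 0 0 (by simp)).eventually_lt_const hδ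
  have hresolvent : ∀ᶠ ε : ℝ in 𝓝 0, ∀ z ∈ sphere (q n : ℂ) ϵ,
      ‖(z • (1 : Matrix (Fin ν) (Fin ν) ℂ) - diagonal (fun t => (q t : ℂ)) - (ε : ℂ) • B)⁻¹ i n‖
        ≤ 2 / δ * (‖B‖ / δ) ^ G.dist i n * ‖ε ^ G.dist i n‖ := by
    filter_upwards [hsmall] with ε hε z hz
    rw [smul_one_eq_diagonal, diagonal_sub, norm_pow, ← Complex.norm_real]
    exact norm_inv_diagonal_sub_smul_apply_le (hG ▸ isBanded_fromRel B) hδ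
      (fun t => by simpa [dist_eq_norm] using hδz z hz t) hε.le i n
  simp_rw [hP]
  exact (isBigO_circleIntegral hϵ.le hresolvent).const_mul_left _

/-- Decay of spectral projection entries: let `Q = diag(q)` be real diagonal with
simple eigenvalue `a = q_n`, `B` a matrix whose sparsity pattern defines a connected
graph on `{1,...,ν}`, and let `P(ε)` be the Riesz spectral projection of `Q + εB`
given by the contour integral over `|λ - a| = ϵ`. Then for `i ≠ n`, the entry
`P_{in}(ε)` is `O(ε^{d(i,n)})` as `ε → 0`, with `d` the graph distance. -/
theorem spectral_projection_entry_decay {ν : ℕ}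
    (q : Fin ν → ℝ) (n : Fin ν) (hsimple : ∀ i, i ≠ n → q i ≠ q n)
    (B : Matrix (Fin ν) (Fin ν) ℂ)
    (G : SimpleGraph (Fin ν)) (hG : G = SimpleGraph.fromRel fun i j => B i j ≠ 0)
    (hconn : G.Connected)
    (ϵ : ℝ) (hϵ : 0 < ϵ) (hϵ' : ∀ i, i ≠ n → ϵ < |q i - q n|)
    (P : ℝ → Matrix (Fin ν) (Fin ν) ℂ)
    (hP : ∀ (ε : ℝ) (i j : Fin ν), P ε i j =
      (2 * Real.pi * Complex.I)⁻¹ *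
        ∮ z in C((q n : ℂ), ϵ),
          ((z • (1 : Matrix (Fin ν) (Fin ν) ℂ) - Matrix.diagonal (fun t => (q t : ℂ)) -
            (ε : ℂ) • B)⁻¹ i j))
    (i : Fin ν) (hi : i ≠ n) :
    (fun ε : ℝ => P ε i n) =O[nhds 0] fun ε : ℝ => ε ^ G.dist i n :=
  spectral_projection_entry_decay_general q n B G hG ϵ hϵ hϵ' P hP i
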